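/- arXiv:2210.12585 — 3 statements merged into one kernel-verified Lean document; each statement's English description precedes it below -/
import Mathlib

section
/- For every p with 0 < p ≤ 5/6, the equation π₃(y) = y has exactly one solution in [0,1], namely y = 1/2. -/
/-- The urn function of the ERW with `k = 3` extractions:
`π₃(y) = (1-p) + (2p-1)(3y² - 2y³)`. -/
noncomputable def pi3 (p y : ℝ) : ℝ :=
  (1 - p) + (2 * p - 1) * (3 * y ^ 2 - 2 * y ^ 3)

/-! `y = 1/2` is always a fixed point, and `π₃(y) - y` factors as `(2y - 1)` times an affine
function of `t = y(1 - y) ∈ [0, 1/4]`. For `p ≤ 5/6` that affine factor is negative on `[0, 1/4)`,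
and `t = 1/4` only at `y = 1/2`. -/

theorem pi3_sub_self (p y : ℝ) :
    pi3 p y - y = (2 * y - 1) * ((2 * p - 1) * (y * (1 - y)) + (p - 1)) := by
  unfold pi3
  ring

theorem two_mul_sub_one_mul_add_sub_one_neg {p t : ℝ} (hp : p ≤ 5 / 6) (ht0 : 0 ≤ t)
    (ht : t < 1 / 4) :
    (2 * p - 1) * t + (p - 1) < 0 := by
  rcases le_or_gt p (1 / 2) with hp' | hp'
  · nlinarith [mul_nonpos_of_nonpos_of_nonneg (by linarith : 2 * p - 1 ≤ 0) ht0]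
  · nlinarith [mul_lt_mul_of_pos_left ht (by linarith : 0 < 2 * p - 1)]

theorem mul_one_sub_lt_quarter {y : ℝ} (hy : y ≠ 1 / 2) : y * (1 - y) < 1 / 4 := by
  have : 0 < (y - 1 / 2) ^ 2 := sq_pos_of_ne_zero (sub_ne_zero.mpr hy)
  nlinarith

theorem stmt_7_general (p : ℝ) (hp1 : p ≤ 5 / 6) :
    ∀ y ∈ Set.Icc (0 : ℝ) 1, (pi3 p y = y ↔ y = 1 / 2) := by
  rintro y ⟨hy0, hy1⟩
  rw [← sub_eq_zero, pi3_sub_self]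
  constructor
  · intro h
    by_contra hy
    have hneg := two_mul_sub_one_mul_add_sub_one_neg hp1 (mul_nonneg hy0 (sub_nonneg.mpr hy1))
      (mul_one_sub_lt_quarter hy)
    rcases mul_eq_zero.mp h with h | h
    · exact hy (by linarith)
    · exact hneg.ne h
  · rintro rfl
    norm_num

theorem stmt_7 (p : ℝ) (hp0 : 0 < p) (hp1 : p ≤ 5 / 6) :
    ∀ y ∈ Set.Icc (0 : ℝ) 1, (pi3 p y = y ↔ y = 1 / 2) :=
  stmt_7_general p hp1
end

section
/- For every p with 5/6 < p ≤ 1, the equation π₃(y) = y has exactly three solutions in [0,1]: y₀ = 1/2, y₋(p) = 1/2 − √(12p² − 16p + 5)/(2(2p−1)), and y₊(p) = 1/2 + √(12p² − 16p + 5)/(2(2p−1)). -/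
/-- The lower nontrivial fixed point `y₋(p)`. -/
noncomputable def yMinus (p : ℝ) : ℝ :=
  1 / 2 - Real.sqrt (12 * p ^ 2 - 16 * p + 5) / (2 * (2 * p - 1))

/-- The upper nontrivial fixed point `y₊(p)`. -/
noncomputable def yPlus (p : ℝ) : ℝ :=
  1 / 2 + Real.sqrt (12 * p ^ 2 - 16 * p + 5) / (2 * (2 * p - 1))

theorem stmt_8 (p : ℝ) (hp0 : 5 / 6 < p) (hp1 : p ≤ 1) :
    (∀ y ∈ Set.Icc (0 : ℝ) 1,
      (pi3 p y = y ↔ y = 1 / 2 ∨ y = yMinus p ∨ y = yPlus p)) ∧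
    yMinus p ∈ Set.Icc (0 : ℝ) 1 ∧ yPlus p ∈ Set.Icc (0 : ℝ) 1 ∧
    yMinus p ≠ 1 / 2 ∧ yPlus p ≠ 1 / 2 ∧ yMinus p ≠ yPlus p := by
  have ha : 0 < 2 * p - 1 := by nlinarith
  have hD : 0 < 12 * p ^ 2 - 16 * p + 5 := by nlinarith
  set s := Real.sqrt (12 * p ^ 2 - 16 * p + 5) with hsdef
  have hs : s ^ 2 = 12 * p ^ 2 - 16 * p + 5 := Real.sq_sqrt hD.le
  have hsp : 0 < s := Real.sqrt_pos.mpr hD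
  have hsa : s ≤ 2 * p - 1 := by nlinarith
  have hq : 0 < s / (2 * (2 * p - 1)) := by positivity
  have hq2 : s / (2 * (2 * p - 1)) ≤ 1 / 2 := by
    rw [div_le_iff₀ (by positivity)]; nlinarith
  have key : ∀ y : ℝ, pi3 p y - y =
      (-2 * (2 * p - 1)) * (y - 1 / 2) * (y - yMinus p) * (y - yPlus p) := by
    intro y
    unfold pi3 yMinus yPlus
    rw [← hsdef]
    have hne : p * 2 - 1 ≠ 0 := by linarith
    field_simp
    ring_nf
    linear_combination (1 - 2*y) * hs
  refine ⟨?_, ⟨by unfold yMinus; rw [← hsdef]; linarith, by unfold yMinus; rw [← hsdef]; linarith⟩,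
    ⟨by unfold yPlus; rw [← hsdef]; linarith, by unfold yPlus; rw [← hsdef]; linarith⟩,
    by unfold yMinus; rw [← hsdef]; intro h; nlinarith [hq],
    by unfold yPlus; rw [← hsdef]; intro h; nlinarith [hq],
    by unfold yMinus yPlus; rw [← hsdef]; intro h; nlinarith [hq]⟩
  intro y _
  constructor
  · intro h
    have h0 : (-2 * (2 * p - 1)) * (y - 1 / 2) * (y - yMinus p) * (y - yPlus p) = 0 := by
      rw [← key y, h]; ring
    rcases mul_eq_zero.mp h0 with h1 | h1
    · rcases mul_eq_zero.mp h1 with h2 | h2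
      · rcases mul_eq_zero.mp h2 with h3 | h3
        · exfalso; nlinarith
        · exact Or.inl (by linarith [sub_eq_zero.mp h3])
      · exact Or.inr (Or.inl (sub_eq_zero.mp h2))
    · exact Or.inr (Or.inr (sub_eq_zero.mp h1))
  · intro h
    have : pi3 p y - y = 0 := by
      rw [key y]
      rcases h with h | h | h <;> rw [h] <;> ring
    linarith
end

section
/- For every p with 5/6 < p ≤ 1, the derivative of the k = 3 urn function at the nontrivial fixed points y_±(p) = 1/2 ± √(12p² − 16p + 5)/(2(2p−1)) equals π₃'(y₊(p)) = π₃'(y₋(p)) = 6(1−p). In particular this derivative is strictly less than 1 for all such p (so y_± are down-crossings), and is strictly less than 1/2 if and only if p > 11/12. -/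
lemma pi3_deriv (p y : ℝ) : deriv (fun z : ℝ => pi3 p z) y = (2 * p - 1) * (6 * y - 6 * y ^ 2) := by
  have h : HasDerivAt (fun z : ℝ => pi3 p z)
      ((2 * p - 1) * (3 * ((2:ℕ) * y ^ 1) - 2 * ((3:ℕ) * y ^ 2))) y := by
    unfold pi3
    exact ((((hasDerivAt_pow 2 y).const_mul 3).sub
      ((hasDerivAt_pow 3 y).const_mul 2)).const_mul (2 * p - 1)).const_add (1 - p)
  rw [h.deriv]; push_cast; ring

theorem stmt_12 (p : ℝ) (hp0 : 5 / 6 < p) (hp1 : p ≤ 1) :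
    deriv (fun z : ℝ => pi3 p z) (yPlus p) = 6 * (1 - p) ∧
    deriv (fun z : ℝ => pi3 p z) (yMinus p) = 6 * (1 - p) ∧
    6 * (1 - p) < 1 ∧
    (6 * (1 - p) < 1 / 2 ↔ 11 / 12 < p) := by
  have h1 : (0:ℝ) < 2 * p - 1 := by linarith
  have hs : (0:ℝ) ≤ 12 * p ^ 2 - 16 * p + 5 := by nlinarith
  have hsq : Real.sqrt (12 * p ^ 2 - 16 * p + 5) ^ 2 = 12 * p ^ 2 - 16 * p + 5 :=
    Real.sq_sqrt hs
  set s := Real.sqrt (12 * p ^ 2 - 16 * p + 5) with hsdef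
  refine ⟨?_, ?_, by linarith, by constructor <;> intro h <;> linarith⟩
  · rw [pi3_deriv, yPlus]
    field_simp
    have hsq' : Real.sqrt (p * (p * 12 - 16) + 5) ^ 2 = p * (p * 12 - 16) + 5 :=
      Real.sq_sqrt (by nlinarith)
    nlinarith [hsq', h1]
  · rw [pi3_deriv, yMinus]
    field_simp
    have hsq' : Real.sqrt (p * (p * 12 - 16) + 5) ^ 2 = p * (p * 12 - 16) + 5 :=
      Real.sq_sqrt (by nlinarith)
    nlinarith [hsq', h1]
end
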